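/- Let G be a compact Lie group and K, H closed subgroups. If [K] ≤ [H] and [H] ≤ [K] in CSC(G) (i.e. some conjugate of K lies in H and some conjugate of H lies in K), then [K] = [H], i.e. K and H are conjugate in G. -/

import Mathlib

/-!
Let `g K g⁻¹ ≤ H` and `g' H g'⁻¹ ≤ K`, and put `a = g' g`, so that `a K a⁻¹ ≤ K`. The elements `x`
with `x K x⁻¹ ≤ K` form a closed submonoid of `G`, and in a compact group a closed submonoid is
closed under inversion, because `a⁻¹` is a limit point of the powers `aⁿ`. Hence `a⁻¹ K a ≤ K`
too, so `a K a⁻¹ = K`, and the chain `g' g K g⁻¹ g'⁻¹ ≤ g' H g'⁻¹ ≤ K` collapses to `g K g⁻¹ = H`.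
-/

open Set

theorem Submonoid.inv_mem_of_isClosed {G : Type*} [Group G] [TopologicalSpace G]
    [IsTopologicalGroup G] [CompactSpace G] {S : Submonoid G} (hS : IsClosed (S : Set G)) {a : G}
    (ha : a ∈ S) : a⁻¹ ∈ S := by
  have h_inv : a⁻¹ ∈ _root_.closure (range (a ^ · : ℕ → G)) := by
    rw [← closure_range_zpow_eq_pow]
    exact _root_.subset_closure ⟨-1, zpow_neg_one a⟩
  refine closure_minimal ?_ hS h_inv
  rintro _ ⟨n, rfl⟩
  exact S.pow_mem ha n

namespace Subgroup

variable {G : Type*} [Group G]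

theorem map_conj_mul (K : Subgroup G) (a b : G) :
    K.map (MulAut.conj (a * b)).toMonoidHom =
      (K.map (MulAut.conj b).toMonoidHom).map (MulAut.conj a).toMonoidHom := by
  rw [map_map, map_mul]
  rfl

theorem map_conj_one (K : Subgroup G) : K.map (MulAut.conj (1 : G)).toMonoidHom = K := by
  rw [map_one]
  exact map_id K

theorem map_conj_le_iff {K : Subgroup G} {a : G} :
    K.map (MulAut.conj a).toMonoidHom ≤ K ↔ ∀ k ∈ K, a * k * a⁻¹ ∈ K := by
  simp [SetLike.le_def]

def conjLeSelf (K : Subgroup G) : Submonoid G where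
  carrier := {a | K.map (MulAut.conj a).toMonoidHom ≤ K}
  one_mem' := K.map_conj_one.le
  mul_mem' {a b} ha hb := (K.map_conj_mul a b).trans_le ((map_mono hb).trans ha)

theorem isClosed_conjLeSelf [TopologicalSpace G] [IsTopologicalGroup G] {K : Subgroup G}
    (hK : IsClosed (K : Set G)) : IsClosed (K.conjLeSelf : Set G) := by
  have h_eq : (K.conjLeSelf : Set G) = ⋂ k ∈ K, (fun a ↦ a * k * a⁻¹) ⁻¹' K := by
    ext a
    simp only [mem_iInter, mem_preimage, SetLike.mem_coe]
    exact map_conj_le_iff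
  rw [h_eq]
  exact isClosed_biInter fun k _ ↦ hK.preimage (by fun_prop)

theorem map_conj_eq_of_map_conj_le [TopologicalSpace G] [IsTopologicalGroup G] [CompactSpace G]
    {K : Subgroup G} (hK : IsClosed (K : Set G)) {a : G}
    (ha : K.map (MulAut.conj a).toMonoidHom ≤ K) : K.map (MulAut.conj a).toMonoidHom = K := by
  have ha_inv : K.map (MulAut.conj a⁻¹).toMonoidHom ≤ K :=
    Submonoid.inv_mem_of_isClosed (S := K.conjLeSelf) (isClosed_conjLeSelf hK) ha
  refine le_antisymm ha ?_
  calc K = K.map (MulAut.conj (a * a⁻¹)).toMonoidHom := by rw [mul_inv_cancel, map_conj_one]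
    _ = (K.map (MulAut.conj a⁻¹).toMonoidHom).map (MulAut.conj a).toMonoidHom := map_conj_mul ..
    _ ≤ K.map (MulAut.conj a).toMonoidHom := map_mono ha_inv

end Subgroup

theorem conj_classes_antisymm_general
    {E : Type*} [NormedAddCommGroup E] [NormedSpace ℝ E]
    {M : Type*} [TopologicalSpace M] {I : ModelWithCorners ℝ E M}
    {G : Type*} [TopologicalSpace G] [ChartedSpace M G] [Group G] [LieGroup I (⊤ : ℕ∞) G]
    [CompactSpace G]
    (K H : Subgroup G) (hK : IsClosed (K : Set G))
    (h1 : ∃ g : G, Subgroup.map (MulAut.conj g).toMonoidHom K ≤ H)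
    (h2 : ∃ g' : G, Subgroup.map (MulAut.conj g').toMonoidHom H ≤ K) :
    ∃ g : G, Subgroup.map (MulAut.conj g).toMonoidHom K = H := by
  have : IsTopologicalGroup G := topologicalGroup_of_lieGroup I (⊤ : ℕ∞)
  obtain ⟨g, hg⟩ := h1
  obtain ⟨g', hg'⟩ := h2
  have h_chain : K.map (MulAut.conj (g' * g)).toMonoidHom ≤ K := by
    rw [K.map_conj_mul]
    exact (Subgroup.map_mono hg).trans hg'
  have h_fix := Subgroup.map_conj_eq_of_map_conj_le hK h_chain
  rw [K.map_conj_mul] at h_fix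
  refine ⟨g, le_antisymm hg ?_⟩
  rw [← Subgroup.map_le_map_iff_of_injective (f := (MulAut.conj g').toMonoidHom)
    (MulAut.conj g').injective, h_fix]
  exact hg'

/-- Antisymmetry of conjugacy classes of closed subgroups of a compact Lie group:
if some conjugate of `K` lies in `H` and some conjugate of `H` lies in `K`,
then `K` and `H` are conjugate. -/
theorem conj_classes_antisymm
    {E : Type*} [NormedAddCommGroup E] [NormedSpace ℝ E] [FiniteDimensional ℝ E]
    {M : Type*} [TopologicalSpace M] {I : ModelWithCorners ℝ E M}
    {G : Type*} [TopologicalSpace G] [ChartedSpace M G] [Group G] [LieGroup I (⊤ : ℕ∞) G]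
    [CompactSpace G]
    (K H : Subgroup G) (hK : IsClosed (K : Set G)) (hH : IsClosed (H : Set G))
    (h1 : ∃ g : G, Subgroup.map (MulAut.conj g).toMonoidHom K ≤ H)
    (h2 : ∃ g' : G, Subgroup.map (MulAut.conj g').toMonoidHom H ≤ K) :
    ∃ g : G, Subgroup.map (MulAut.conj g).toMonoidHom K = H :=
  conj_classes_antisymm_general (I := I) K H hK h1 h2
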